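/- For every integer n ≥ 2 and every real t with 0 < t ≤ 1, one has scal_B(n,t)/(2n²−1) < n/(2n−1) + (1/t² − 1). (This is the inequality scal(h_t)/(m−1) < λ^{1,1}(t) = μ₁ + (1/t²−1)φ₁ for the canonical variation h_t on SO(2n+1)/Tⁿ, where μ₁ = n/(2n−1) and φ₁ = 1.) -/

import Mathlib

/-- Scalar curvature of the canonical variation `h_t` of the normal homogeneous
metric on the full flag manifold `SO(2n+1)/Tⁿ`. -/
noncomputable def scalB (n : ℕ) (t : ℝ) : ℝ :=
  (5 * n ^ 3 - 2 * n ^ 2 * t ^ 4 + 8 * n ^ 2 * t ^ 2 - 7 * n ^ 2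
    + 2 * n * t ^ 4 - 4 * n * t ^ 2 + 2 * n) / (4 * (2 * n - 1) * t ^ 2)

/-!
Clearing denominators, `λ^{1,1}(t) - scal_B(n,t)/(2n²-1)` is `gapNumerator n t²` over the positive
`4(2n-1)(2n²-1)t²`. As a polynomial in `s = t²`, `gapNumerator x s` equals `x(x-1)(3x+4) > 0` at
`s = 1`, and its difference from that value is `(1 - s)` times a factor that stays positive for
`x > 1`, `s ≤ 1`.
-/

def gapNumerator (x s : ℝ) : ℝ :=
  11 * x ^ 3 - x ^ 2 - 10 * x + 4 - (8 * x ^ 3 - 8 * x + 4) * s + 2 * x * (x - 1) * s ^ 2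

lemma gapNumerator_eq (x s : ℝ) :
    gapNumerator x s =
      x * (x - 1) * (3 * x + 4) + (1 - s) * (8 * x ^ 3 - 8 * x + 4 - 2 * x * (x - 1) * (1 + s)) := by
  unfold gapNumerator; ring

lemma gapNumerator_pos {x s : ℝ} (hx : 1 < x) (hs1 : s ≤ 1) :
    0 < gapNumerator x s := by
  have hx0 : 0 < x - 1 := sub_pos.mpr hx
  have hc : 0 < x * (x - 1) := mul_pos (by linarith) hx0
  have hvalue_one : 0 < x * (x - 1) * (3 * x + 4) := mul_pos hc (by linarith)
  have hslope : 0 ≤ 8 * x ^ 3 - 8 * x + 4 - 2 * x * (x - 1) * (1 + s) := by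
    have hsplit : 8 * x ^ 3 - 8 * x + 4 - 2 * x * (x - 1) * (1 + s) =
        2 * (x * (x - 1)) * (1 - s) + 4 * (x * (x - 1)) * (2 * x + 1) + 4 := by ring
    rw [hsplit]
    have := sub_nonneg.mpr hs1
    positivity
  rw [gapNumerator_eq]
  linarith [mul_nonneg (sub_nonneg.mpr hs1) hslope]

lemma lambda11_sub_scalB_div (n : ℕ) {t : ℝ} (hn₁ : (2 * n - 1 : ℝ) ≠ 0)
    (hn₂ : (2 * n ^ 2 - 1 : ℝ) ≠ 0) (ht : t ≠ 0) :
    n / (2 * n - 1) + (1 / t ^ 2 - 1) - scalB n t / (2 * n ^ 2 - 1) =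
      gapNumerator n (t ^ 2) / (4 * (2 * n - 1) * (2 * n ^ 2 - 1) * t ^ 2) := by
  -- `field_simp` looks for the nonvanishing of its own normal forms of the denominators
  have h₁ : (n : ℝ) * 2 - 1 ≠ 0 := by rwa [mul_comm]
  have h₂ : (n : ℝ) ^ 2 * 2 - 1 ≠ 0 := by rwa [mul_comm]
  rw [scalB, gapNumerator]
  field_simp
  ring

/-- For `n ≥ 2` and `0 < t ≤ 1`,
`scal_B(n,t)/(2n²-1) < λ^{1,1}(t) = n/(2n-1) + (1/t² - 1)`
(here `m = 2n²`, `μ₁ = n/(2n-1)`, `φ₁ = 1`). -/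
theorem scalB_div_lt_lambda11 (n : ℕ) (hn : 2 ≤ n) (t : ℝ) (ht0 : 0 < t) (ht1 : t ≤ 1) :
    scalB n t / (2 * n ^ 2 - 1) < n / (2 * n - 1) + (1 / t ^ 2 - 1) := by
  have hx : (1 : ℝ) < n := by exact_mod_cast hn
  have hn₁ : (0 : ℝ) < 2 * n - 1 := by linarith
  have hn₂ : (0 : ℝ) < 2 * n ^ 2 - 1 := by nlinarith
  have ht2 : t ^ 2 ≤ 1 := pow_le_one₀ ht0.le ht1
  rw [← sub_pos, lambda11_sub_scalB_div n hn₁.ne' hn₂.ne' ht0.ne']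
  exact div_pos (gapNumerator_pos hx ht2) (by positivity)
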